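/- For every compact set K contained in Ω, sup_{x∈K} |ρ_ε(x)| → 0 as ε → 0⁺. (Asymptotic electroneutrality of Poisson–Boltzmann equilibria with blocking boundary conditions.) -/

import Mathlib

open MeasureTheory Real Filter Set Topology

/-- The Laplacian: sum of second partial derivatives. -/
noncomputable def lap {d : ℕ} (f : EuclideanSpace ℝ (Fin d) → ℝ) (x : EuclideanSpace ℝ (Fin d)) : ℝ :=
  ∑ i : Fin d, fderiv ℝ (fun y => fderiv ℝ f y (EuclideanSpace.single i 1)) x (EuclideanSpace.single i 1)

section Helpers
open Bornology


lemma deriv2_nonpos_at_max {g G : ℝ → ℝ} {δ : ℝ} (hδ : 0 < δ)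
    (hg : ∀ t, |t| < δ → g t ≤ g 0)
    (hgd : ∀ t, |t| < δ → HasDerivAt g (G t) t)
    {T : ℝ} (hGd : HasDerivAt G T 0) : T ≤ 0 := by
  by_contra hT
  push_neg at hT
  -- G 0 = 0
  have hmax : IsLocalMax g 0 := by
    filter_upwards [Metric.ball_mem_nhds (0:ℝ) hδ] with t ht
    simpa [Real.dist_eq] using hg t (by simpa [Real.dist_eq] using ht)
  have hG0 : G 0 = 0 := by
    have := hmax.deriv_eq_zero
    rw [(hgd 0 (by simpa using hδ)).deriv] at this
    exact this
  -- eventually G t > 0 for small t > 0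
  have hslope := hasDerivAt_iff_tendsto_slope.1 hGd
  have hev : ∀ᶠ t in 𝓝[≠] (0:ℝ), 0 < slope G 0 t := by
    apply hslope.eventually (eventually_gt_nhds hT)
  rw [eventually_nhdsWithin_iff, Metric.eventually_nhds_iff] at hev
  obtain ⟨u, hu, hG⟩ := hev
  set u' := min (u/2) (δ/2) with hu'
  have hu'pos : 0 < u' := lt_min (by linarith) (by linarith)
  have hu'u : u' < u := lt_of_le_of_lt (min_le_left _ _) (by linarith)
  have hu'δ : u' < δ := lt_of_le_of_lt (min_le_right _ _) (by linarith)
  -- deriv g is positive on (0, u')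
  have hgpos : ∀ t ∈ interior (Icc (0:ℝ) u'), 0 < deriv g t := by
    intro t ht
    rw [interior_Icc] at ht
    have ht0 : t ≠ 0 := ne_of_gt ht.1
    have hdist : dist t 0 < u := by
      rw [Real.dist_eq, sub_zero, abs_of_pos ht.1]; linarith [ht.2]
    have := hG hdist ht0
    rw [slope_def_field, hG0, sub_zero, sub_zero, div_pos_iff] at this
    have hGt : 0 < G t := by
      rcases this with ⟨h1, _⟩ | ⟨_, h2⟩
      · exact h1
      · linarith [ht.1]
    rw [(hgd t (by rw [abs_of_pos ht.1]; linarith [ht.2])).deriv]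
    exact hGt
  have hcont : ContinuousOn g (Icc 0 u') := by
    intro t ht
    exact ((hgd t (by rw [abs_of_nonneg ht.1]; linarith [ht.2])).continuousAt).continuousWithinAt
  have hmono := strictMonoOn_of_deriv_pos (convex_Icc 0 u') hcont hgpos
  have : g 0 < g u' := hmono (by constructor <;> [rfl; exact le_of_lt hu'pos] ) 
      (⟨le_of_lt hu'pos, le_refl _⟩) hu'pos
  have := hg u' (by rw [abs_of_pos hu'pos]; exact hu'δ)
  linarith

variable {E : Type*} [NormedAddCommGroup E] [NormedSpace ℝ E]

lemma fderiv2_nonpos {f : E → ℝ} {U : Set E} (hU : IsOpen U) {z : E} (hz : z ∈ U)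
    (hf : ContDiffOn ℝ 2 f U) (hmax : ∀ x ∈ U, f x ≤ f z) (v : E) :
    fderiv ℝ (fun y => fderiv ℝ f y v) z v ≤ 0 := by
  set φ : E → ℝ := fun y => fderiv ℝ f y v with hφdef
  have hf1 : ContDiffOn ℝ 1 (fderiv ℝ f) U := hf.fderiv_of_isOpen hU (by norm_num)
  have hφ : ContDiffOn ℝ 1 φ U := hf1.clm_apply contDiffOn_const
  have hfd : DifferentiableOn ℝ f U := hf.differentiableOn (by norm_num)
  obtain ⟨δ₀, hδ₀, hball⟩ := Metric.isOpen_iff.1 hU z hz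
  set δ := δ₀ / (‖v‖ + 1) with hδdef
  have hδ : 0 < δ := div_pos hδ₀ (by positivity)
  have hmem : ∀ t : ℝ, |t| < δ → z + t • v ∈ U := by
    intro t ht
    apply hball
    rw [Metric.mem_ball, dist_eq_norm]
    have : ‖z + t • v - z‖ = |t| * ‖v‖ := by
      rw [add_sub_cancel_left, norm_smul, Real.norm_eq_abs]
    rw [this]
    calc |t| * ‖v‖ ≤ |t| * (‖v‖ + 1) := by
            apply mul_le_mul_of_nonneg_left (by linarith) (abs_nonneg t)
      _ < δ * (‖v‖ + 1) := by
            apply mul_lt_mul_of_pos_right ht (by positivity)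
      _ = δ₀ := by rw [hδdef, div_mul_cancel₀ _ (by positivity)]
  have hγ : ∀ t : ℝ, HasDerivAt (fun s : ℝ => z + s • v) v t := by
    intro t
    simpa using ((hasDerivAt_id t).smul_const v).const_add z
  apply deriv2_nonpos_at_max (g := fun t => f (z + t • v)) (G := fun t => φ (z + t • v)) hδ
  · intro t ht
    simpa using hmax _ (hmem t ht)
  · intro t ht
    have hdf : DifferentiableAt ℝ f (z + t • v) :=
      (hfd _ (hmem t ht)).differentiableAt (hU.mem_nhds (hmem t ht))
    have := hdf.hasFDerivAt.comp_hasDerivAt t (hγ t)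
    exact this
  · have hdφ : DifferentiableAt ℝ φ z :=
      (hφ.differentiableOn one_ne_zero _ hz).differentiableAt (hU.mem_nhds hz)
    have h0 : z + (0:ℝ) • v = z := by simp
    have := (h0 ▸ hdφ.hasFDerivAt).comp_hasDerivAt 0 (hγ 0)
    simpa [h0, Function.comp_def] using this

variable {d : ℕ}

lemma lap_nonpos_at_max {f : EuclideanSpace ℝ (Fin d) → ℝ} {U : Set (EuclideanSpace ℝ (Fin d))}
    (hU : IsOpen U) {z : EuclideanSpace ℝ (Fin d)} (hz : z ∈ U)
    (hf : ContDiffOn ℝ 2 f U) (hmax : ∀ x ∈ U, f x ≤ f z) : lap f z ≤ 0 :=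
  Finset.sum_nonpos fun i _ => fderiv2_nonpos hU hz hf hmax _

lemma lap_neg (f : EuclideanSpace ℝ (Fin d) → ℝ) (x : EuclideanSpace ℝ (Fin d)) :
    lap (fun y => -(f y)) x = -lap f x := by
  unfold lap
  rw [← Finset.sum_neg_distrib]
  congr 1; funext i
  have : (fun y => fderiv ℝ (fun w => -(f w)) y (EuclideanSpace.single i 1))
      = fun y => -(fderiv ℝ f y (EuclideanSpace.single i 1)) := by
    funext y; rw [fderiv_fun_neg]; simp
  rw [this, fderiv_fun_neg]; simp

lemma lap_sub_const (f : EuclideanSpace ℝ (Fin d) → ℝ) (c : ℝ) (x : EuclideanSpace ℝ (Fin d)) :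
    lap (fun y => f y - c) x = lap f x := by
  unfold lap
  congr 1; funext i
  have : (fun y => fderiv ℝ (fun w => f w - c) y (EuclideanSpace.single i 1))
      = fun y => fderiv ℝ f y (EuclideanSpace.single i 1) := by
    funext y; rw [fderiv_sub_const]
  rw [this]

lemma lap_sub {f g : EuclideanSpace ℝ (Fin d) → ℝ} {U : Set (EuclideanSpace ℝ (Fin d))}
    (hU : IsOpen U) {z : EuclideanSpace ℝ (Fin d)} (hz : z ∈ U)
    (hf : ContDiffOn ℝ 2 f U) (hg : ContDiff ℝ 2 g) :
    lap (fun y => f y - g y) z = lap f z - lap g z := by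
  have hfd : DifferentiableOn ℝ f U := hf.differentiableOn (by norm_num)
  have hf1 : ContDiffOn ℝ 1 (fderiv ℝ f) U := hf.fderiv_of_isOpen hU (by norm_num)
  have hgd : Differentiable ℝ g := hg.differentiable (by norm_num)
  unfold lap
  rw [← Finset.sum_sub_distrib]
  congr 1; funext i
  set v := EuclideanSpace.single i (1:ℝ)
  have hev : (fun y => fderiv ℝ (fun w => f w - g w) y v)
      =ᶠ[nhds z] (fun y => fderiv ℝ f y v - fderiv ℝ g y v) := by
    filter_upwards [hU.mem_nhds hz] with y hy
    rw [fderiv_fun_sub ((hfd y hy).differentiableAt (hU.mem_nhds hy)) (hgd y)]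
    simp
  rw [hev.fderiv_eq]
  have h1 : DifferentiableAt ℝ (fun y => fderiv ℝ f y v) z := by
    have : ContDiffOn ℝ 1 (fun y => fderiv ℝ f y v) U := hf1.clm_apply contDiffOn_const
    exact (this.differentiableOn one_ne_zero z hz).differentiableAt (hU.mem_nhds hz)
  have h2 : DifferentiableAt ℝ (fun y => fderiv ℝ g y v) z := by
    have : ContDiff ℝ 1 (fun y => fderiv ℝ g y v) :=
      (hg.fderiv_right (m := 1) (by norm_num)).clm_apply contDiff_const
    exact this.differentiable one_ne_zero z
  rw [fderiv_fun_sub h1 h2]; simp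

variable {d : ℕ}

noncomputable def bar (d : ℕ) (μ a : ℝ) (p : EuclideanSpace ℝ (Fin d)) :
    EuclideanSpace ℝ (Fin d) → ℝ :=
  fun x => a * ∑ i : Fin d, Real.cosh (μ * (x i - p i))

lemma coord_hasFDerivAt (μ : ℝ) (pi : ℝ) (i : Fin d) (x : EuclideanSpace ℝ (Fin d)) :
    HasFDerivAt (fun y : EuclideanSpace ℝ (Fin d) => μ * (y i - pi))
      (μ • (EuclideanSpace.proj i : EuclideanSpace ℝ (Fin d) →L[ℝ] ℝ)) x := by
  have h : HasFDerivAt (fun y : EuclideanSpace ℝ (Fin d) => y i - pi)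
      (EuclideanSpace.proj i : EuclideanSpace ℝ (Fin d) →L[ℝ] ℝ) x :=
    (EuclideanSpace.proj i : EuclideanSpace ℝ (Fin d) →L[ℝ] ℝ).hasFDerivAt.sub_const pi
  exact h.const_mul μ

lemma bar_contDiff (μ a : ℝ) (p : EuclideanSpace ℝ (Fin d)) :
    ContDiff ℝ 2 (bar d μ a p) := by
  unfold bar
  apply ContDiff.mul contDiff_const
  apply ContDiff.sum
  intro i _
  exact Real.contDiff_cosh.comp
    ((contDiff_const.mul ((((EuclideanSpace.proj i : EuclideanSpace ℝ (Fin d) →L[ℝ] ℝ).contDiff : ContDiff ℝ 2 (fun x : EuclideanSpace ℝ (Fin d) => x i))).sub contDiff_const)))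

lemma bar_fderiv_apply (μ a : ℝ) (p : EuclideanSpace ℝ (Fin d))
    (x : EuclideanSpace ℝ (Fin d)) (j : Fin d) :
    fderiv ℝ (bar d μ a p) x (EuclideanSpace.single j 1)
      = a * (μ * Real.sinh (μ * (x j - p j))) := by
  have h : HasFDerivAt (bar d μ a p)
      (a • ∑ i : Fin d, (Real.sinh (μ * (x i - p i)) * μ) •
        (EuclideanSpace.proj i : EuclideanSpace ℝ (Fin d) →L[ℝ] ℝ)) x := by
    unfold bar
    apply HasFDerivAt.const_mul
    apply HasFDerivAt.fun_sum
    intro i _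
    have := (coord_hasFDerivAt μ (p i) i x).cosh
    rwa [smul_smul] at this
  rw [h.fderiv]
  rw [ContinuousLinearMap.smul_apply, ContinuousLinearMap.sum_apply]
  have hz : ∀ i ∈ Finset.univ, i ≠ j →
      ((Real.sinh (μ * (x i - p i)) * μ) • (EuclideanSpace.proj i :
        EuclideanSpace ℝ (Fin d) →L[ℝ] ℝ)) (EuclideanSpace.single j 1) = 0 := by
    intro i _ hij
    rw [ContinuousLinearMap.smul_apply, PiLp.proj_apply, EuclideanSpace.single_apply,
      if_neg hij, smul_zero]
  rw [Finset.sum_eq_single j hz (fun h => absurd (Finset.mem_univ j) h)]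
  rw [ContinuousLinearMap.smul_apply, PiLp.proj_apply, EuclideanSpace.single_apply,
    if_pos rfl]
  simp only [smul_eq_mul]
  ring

lemma lap_bar (μ a : ℝ) (p : EuclideanSpace ℝ (Fin d)) (x : EuclideanSpace ℝ (Fin d)) :
    lap (bar d μ a p) x = μ ^ 2 * bar d μ a p x := by
  unfold lap
  have key : ∀ j : Fin d,
      fderiv ℝ (fun y => fderiv ℝ (bar d μ a p) y (EuclideanSpace.single j 1)) x
        (EuclideanSpace.single j 1) = a * μ ^ 2 * Real.cosh (μ * (x j - p j)) := by
    intro j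
    have heq : (fun y => fderiv ℝ (bar d μ a p) y (EuclideanSpace.single j 1))
        = fun y => (a * μ) * Real.sinh (μ * (y j - p j)) := by
      funext y; rw [bar_fderiv_apply]; ring
    rw [heq]
    have h : HasFDerivAt (fun y : EuclideanSpace ℝ (Fin d) => (a * μ) * Real.sinh (μ * (y j - p j)))
        ((a * μ) • (Real.cosh (μ * (x j - p j)) • (μ • (EuclideanSpace.proj j :
          EuclideanSpace ℝ (Fin d) →L[ℝ] ℝ)))) x :=
      ((coord_hasFDerivAt μ (p j) j x).sinh).const_mul (a * μ)
    rw [h.fderiv]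
    rw [ContinuousLinearMap.smul_apply, ContinuousLinearMap.smul_apply,
      ContinuousLinearMap.smul_apply, PiLp.proj_apply, EuclideanSpace.single_apply,
      if_pos rfl]
    simp only [smul_eq_mul]
    ring
  rw [Finset.sum_congr rfl (fun j _ => key j)]
  unfold bar
  rw [Finset.mul_sum, Finset.mul_sum]
  congr 1; funext j
  ring

-- elementary facts about F t = exp t - exp (-t)
lemma F_strictMono : StrictMono (fun t : ℝ => exp t - exp (-t)) := by
  intro s t h
  have h1 : exp s < exp t := exp_lt_exp.2 h
  have h2 : exp (-t) < exp (-s) := exp_lt_exp.2 (by linarith)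
  simp only
  linarith

lemma self_le_F {t : ℝ} (ht : 0 ≤ t) : t ≤ exp t - exp (-t) := by
  have h1 := add_one_le_exp t
  have h2 : exp (-t) ≤ 1 := exp_le_one_iff.2 (by linarith)
  linarith

lemma F_nonpos_iff {t : ℝ} : exp t - exp (-t) ≤ 0 ↔ t ≤ 0 := by
  constructor
  · intro h
    by_contra ht
    push_neg at ht
    have := F_strictMono (show (0:ℝ) < t from ht)
    simp only [neg_zero, exp_zero, sub_self] at this
    linarith
  · intro h
    have : exp t ≤ exp (-t) := exp_le_exp.2 (by linarith)
    linarith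

/-- Maximum principle. -/
lemma maxp {d : ℕ} {U : Set (EuclideanSpace ℝ (Fin d))} (hUo : IsOpen U) (hUb : IsBounded U)
    {θ : EuclideanSpace ℝ (Fin d) → ℝ} (hθ2 : ContDiffOn ℝ 2 θ U)
    (hθc : ContinuousOn θ (closure U))
    {ε κ : ℝ} (hε : 0 < ε) (hκ : 0 < κ)
    (hpde : ∀ x ∈ U, ε * lap θ x = κ * (exp (θ x) - exp (-(θ x))))
    {β : ℝ} (hbdy : ∀ z ∈ frontier U, θ z ≤ β) :
    ∀ x ∈ closure U, θ x ≤ max 0 β := by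
  intro x hx
  have hcomp : IsCompact (closure U) :=
    Metric.isCompact_of_isClosed_isBounded isClosed_closure hUb.closure
  obtain ⟨z, hzmem, hzmax⟩ := hcomp.exists_isMaxOn ⟨x, hx⟩ hθc
  have hxz : θ x ≤ θ z := hzmax hx
  by_cases hzU : z ∈ U
  · have hmax : ∀ y ∈ U, θ y ≤ θ z := fun y hy => hzmax (subset_closure hy)
    have hlap : lap θ z ≤ 0 := lap_nonpos_at_max hUo hzU hθ2 hmax
    have := hpde z hzU
    have hF : κ * (exp (θ z) - exp (-(θ z))) ≤ 0 := by
      rw [← this]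
      exact mul_nonpos_of_nonneg_of_nonpos (le_of_lt hε) hlap
    have : exp (θ z) - exp (-(θ z)) ≤ 0 := by
      by_contra hcon
      push_neg at hcon
      nlinarith
    have hz0 : θ z ≤ 0 := F_nonpos_iff.1 this
    exact le_trans hxz (le_trans hz0 (le_max_left _ _))
  · have : z ∈ frontier U := by
      rw [hUo.frontier_eq]
      exact ⟨hzmem, hzU⟩
    exact le_trans hxz (le_trans (hbdy z this) (le_max_right _ _))

/-- Barrier comparison: interior smallness. -/
lemma barrier_est {d : ℕ} (hd : 0 < d) {U : Set (EuclideanSpace ℝ (Fin d))} (hUo : IsOpen U)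
    {θ : EuclideanSpace ℝ (Fin d) → ℝ} (hθ2 : ContDiffOn ℝ 2 θ U)
    {ε κ : ℝ} (hε : 0 < ε) (hκ : 0 < κ)
    (hpde : ∀ x ∈ U, ε * lap θ x = κ * (exp (θ x) - exp (-(θ x))))
    {M : ℝ} (hM : 0 ≤ M) (x₀ : EuclideanSpace ℝ (Fin d)) (R : ℝ) (hR : 0 < R)
    (hball : Metric.closedBall x₀ R ⊆ U)
    (hbd : ∀ x ∈ Metric.closedBall x₀ R, θ x ≤ M) :
    θ x₀ ≤ (M + 1) * d / Real.cosh (Real.sqrt (κ / ε) * (R / Real.sqrt d)) := by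
  set μ := Real.sqrt (κ / ε) with hμdef
  have hμpos : 0 < μ := Real.sqrt_pos.2 (div_pos hκ hε)
  have hdpos : (0:ℝ) < d := by exact_mod_cast hd
  have hsd : (0:ℝ) < Real.sqrt d := Real.sqrt_pos.2 hdpos
  set C := Real.cosh (μ * (R / Real.sqrt d)) with hCdef
  have hC1 : 1 ≤ C := Real.one_le_cosh _
  have hCpos : 0 < C := lt_of_lt_of_le one_pos hC1
  set a := (M + 1) / C with hadef
  have hapos : 0 < a := div_pos (by linarith) hCpos
  set w := bar d μ a x₀ with hwdef
  -- w is positive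
  have hwpos : ∀ x, 0 < w x := by
    intro x
    apply mul_pos hapos
    apply Finset.sum_pos (fun i _ => lt_of_lt_of_le one_pos (Real.one_le_cosh _))
    exact Finset.univ_nonempty_iff.2 ⟨⟨0, hd⟩⟩
  -- PDE satisfied by w
  have hwpde : ∀ x, ε * lap w x = κ * w x := by
    intro x
    rw [lap_bar]
    have : μ ^ 2 = κ / ε := Real.sq_sqrt (le_of_lt (div_pos hκ hε))
    rw [this]
    field_simp
    rfl
  -- boundary bound on the sphere
  have hsphere : ∀ x, dist x x₀ = R → M + 1 ≤ w x := by
    intro x hx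
    have hsum : ∑ i : Fin d, (x i - x₀ i) ^ 2 = R ^ 2 := by
      have := EuclideanSpace.dist_eq x x₀
      rw [hx] at this
      have h2 : R ^ 2 = ∑ i : Fin d, dist (x i) (x₀ i) ^ 2 := by
        rw [this, Real.sq_sqrt]
        positivity
      rw [h2]
      congr 1; funext i
      rw [Real.dist_eq, sq_abs]
    have hex : ∃ i : Fin d, R ^ 2 / d ≤ (x i - x₀ i) ^ 2 := by
      by_contra hcon
      push_neg at hcon
      have : ∑ i : Fin d, (x i - x₀ i) ^ 2 < ∑ _i : Fin d, R ^ 2 / (d:ℝ) :=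
        Finset.sum_lt_sum_of_nonempty (Finset.univ_nonempty_iff.2 ⟨⟨0, hd⟩⟩)
          (fun i _ => hcon i)
      rw [Finset.sum_const, Finset.card_univ, Fintype.card_fin, nsmul_eq_mul] at this
      rw [hsum] at this
      rw [mul_div_cancel₀] at this
      · exact lt_irrefl _ this
      · exact ne_of_gt hdpos
    obtain ⟨i, hi⟩ := hex
    have hRd : Real.sqrt (R ^ 2 / d) = R / Real.sqrt d := by
      rw [Real.sqrt_div (by positivity) , Real.sqrt_sq hR.le]
    have habs : R / Real.sqrt d ≤ |x i - x₀ i| := by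
      have h1 : Real.sqrt (R ^ 2 / d) ≤ Real.sqrt ((x i - x₀ i) ^ 2) := Real.sqrt_le_sqrt hi
      rwa [hRd, Real.sqrt_sq_eq_abs] at h1
    have hcoshi : C ≤ Real.cosh (μ * (x i - x₀ i)) := by
      rw [hCdef, Real.cosh_le_cosh]
      rw [abs_mul, abs_mul, abs_of_pos hμpos]
      apply mul_le_mul_of_nonneg_left _ hμpos.le
      rwa [abs_of_pos (div_pos hR hsd)]
    have hsumge : C ≤ ∑ j : Fin d, Real.cosh (μ * (x j - x₀ j)) := by
      refine le_trans hcoshi ?_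
      exact Finset.single_le_sum (fun j _ => (Real.cosh_pos (x := μ * (x j - x₀ j))).le)
        (Finset.mem_univ i)
    have : a * C ≤ w x := by
      rw [hwdef]
      unfold bar
      exact mul_le_mul_of_nonneg_left hsumge hapos.le
    have haC : a * C = M + 1 := by
      rw [hadef]; field_simp
    linarith
  -- value of w at the center
  have hwx₀ : w x₀ = (M + 1) * d / C := by
    rw [hwdef]
    unfold bar
    have : ∀ i : Fin d, Real.cosh (μ * (x₀ i - x₀ i)) = 1 := by
      intro i; simp
    rw [Finset.sum_congr rfl (fun i _ => this i), Finset.sum_const, Finset.card_univ,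
      Fintype.card_fin, nsmul_eq_mul, mul_one, hadef]
    ring
  -- comparison on the closed ball
  have hsub : Metric.ball x₀ R ⊆ U := fun y hy => hball (Metric.ball_subset_closedBall hy)
  have hθ2b : ContDiffOn ℝ 2 θ (Metric.ball x₀ R) := hθ2.mono hsub
  have hcont : ContinuousOn (fun x => θ x - w x) (Metric.closedBall x₀ R) :=
    ((hθ2.continuousOn).mono hball).sub ((bar_contDiff μ a x₀).continuous.continuousOn)
  obtain ⟨z, hz, hzmax⟩ := (isCompact_closedBall x₀ R).exists_isMaxOn
    ⟨x₀, Metric.mem_closedBall_self hR.le⟩ hcont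
  have hzle : θ z - w z ≤ 0 := by
    by_contra hpos
    push_neg at hpos
    have hzball : z ∈ Metric.ball x₀ R := by
      rw [Metric.mem_ball]
      rcases lt_or_eq_of_le (Metric.mem_closedBall.1 hz) with h | h
      · exact h
      · exfalso
        have h1 : θ z ≤ M := hbd z hz
        have h2 : M + 1 ≤ w z := hsphere z h
        linarith
    have hmaxball : ∀ y ∈ Metric.ball x₀ R, θ y - w y ≤ θ z - w z :=
      fun y hy => hzmax (Metric.ball_subset_closedBall hy)
    have hC2 : ContDiffOn ℝ 2 (fun x => θ x - w x) (Metric.ball x₀ R) :=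
      hθ2b.sub ((bar_contDiff μ a x₀).contDiffOn)
    have hlap : lap (fun x => θ x - w x) z ≤ 0 :=
      lap_nonpos_at_max Metric.isOpen_ball hzball hC2 hmaxball
    rw [lap_sub Metric.isOpen_ball hzball hθ2b (bar_contDiff μ a x₀)] at hlap
    have h1 : ε * lap θ z ≤ ε * lap w z :=
      mul_le_mul_of_nonneg_left (by linarith) hε.le
    rw [hpde z (hsub hzball), hwpde z] at h1
    have h2 : w z ≤ exp (w z) - exp (-(w z)) := self_le_F (hwpos z).le
    have h3 : exp (θ z) - exp (-(θ z)) ≤ exp (w z) - exp (-(w z)) := by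
      have : κ * (exp (θ z) - exp (-(θ z))) ≤ κ * (exp (w z) - exp (-(w z))) := by
        nlinarith
      exact le_of_mul_le_mul_left this hκ
    have h4 : θ z ≤ w z := by
      by_contra hcon
      push_neg at hcon
      have := F_strictMono hcon
      simp only at this
      linarith
    linarith
  have hx₀z : θ x₀ - w x₀ ≤ θ z - w z := hzmax (Metric.mem_closedBall_self hR.le)
  rw [← hwx₀]
  linarith

lemma frontier_ne {d : ℕ} (hd : 0 < d) {U : Set (EuclideanSpace ℝ (Fin d))}
    (hne : U.Nonempty) (hb : IsBounded U) : (frontier U).Nonempty := by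
  haveI : Nonempty (Fin d) := ⟨⟨0, hd⟩⟩
  by_contra h
  rw [not_nonempty_iff_eq_empty] at h
  have hclopen : IsClopen U := isClopen_iff_frontier_eq_empty.2 h
  have huniv := hclopen.eq_univ hne
  rw [huniv] at hb
  exact NormedSpace.unbounded_univ ℝ (EuclideanSpace ℝ (Fin d)) hb

lemma no_neg_bdry {d : ℕ} (hd : 0 < d) {U : Set (EuclideanSpace ℝ (Fin d))}
    (hUo : IsOpen U) (hUne : U.Nonempty) (hUb : IsBounded U)
    {θ : EuclideanSpace ℝ (Fin d) → ℝ} (hθ2 : ContDiffOn ℝ 2 θ U)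
    (hθc : ContinuousOn θ (closure U))
    {ε κ : ℝ} (hε : 0 < ε) (hκ : 0 < κ)
    (hpde : ∀ x ∈ U, ε * lap θ x = κ * (exp (θ x) - exp (-(θ x))))
    {β : ℝ} (hbdy : ∀ z ∈ frontier U, θ z ≤ β) (hβ : β < 0)
    (hint1 : IntegrableOn (fun x => exp (-(θ x))) U volume)
    (hint2 : IntegrableOn (fun x => exp (θ x)) U volume)
    (hS : ∫ x in U, exp (θ x) = ∫ x in U, exp (-(θ x))) : False := by
  have hle : ∀ x ∈ closure U, θ x ≤ 0 := by
    intro x hx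
    have := maxp hUo hUb hθ2 hθc hε hκ hpde hbdy x hx
    rwa [max_eq_left hβ.le] at this
  set g : EuclideanSpace ℝ (Fin d) → ℝ := fun x => exp (-(θ x)) - exp (θ x) with hgdef
  have hg0 : ∫ x in U, g x = 0 := by
    rw [hgdef]
    simp only
    rw [integral_sub hint1 hint2, hS, sub_self]
  have hgnonneg : ∀ x ∈ U, 0 ≤ g x := by
    intro x hx
    have h1 : θ x ≤ 0 := hle x (subset_closure hx)
    have h2 : exp (θ x) ≤ 1 := exp_le_one_iff.2 h1
    have h3 : 1 ≤ exp (-(θ x)) := one_le_exp_iff.2 (by linarith)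
    simp only [hgdef]
    linarith
  have hθcU : ContinuousOn θ U := hθc.mono subset_closure
  have hθ0 : ∀ x ∈ U, θ x = 0 := by
    by_contra hcon
    push_neg at hcon
    obtain ⟨x₁, hx₁U, hx₁⟩ := hcon
    have hx₁neg : θ x₁ < 0 := lt_of_le_of_ne (hle x₁ (subset_closure hx₁U)) hx₁
    have hgx₁ : 0 < g x₁ := by
      have h2 : exp (θ x₁) < 1 := exp_lt_one_iff.2 hx₁neg
      have h3 : 1 < exp (-(θ x₁)) := one_lt_exp_iff.2 (by linarith)
      simp only [hgdef]
      linarith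
    have hgcont : ContinuousOn g U :=
      (Real.continuous_exp.comp_continuousOn hθcU.neg).sub
        (Real.continuous_exp.comp_continuousOn hθcU)
    set V := U ∩ g ⁻¹' (Ioi 0) with hVdef
    have hVopen : IsOpen V := hgcont.isOpen_inter_preimage hUo isOpen_Ioi
    have hVne : V.Nonempty := ⟨x₁, hx₁U, hgx₁⟩
    have hVpos : 0 < volume V := hVopen.measure_pos volume hVne
    have hpos : 0 < ∫ x in U, g x := by
      rw [setIntegral_pos_iff_support_of_nonneg_ae]
      · apply lt_of_lt_of_le hVpos
        apply measure_mono
        intro v hv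
        exact ⟨ne_of_gt hv.2, hv.1⟩
      · rw [EventuallyLE, ae_restrict_iff' hUo.measurableSet]
        exact ae_of_all _ hgnonneg
      · exact hint1.sub hint2
    rw [hg0] at hpos
    exact lt_irrefl _ hpos
  obtain ⟨z₀, hz₀⟩ := frontier_ne hd hUne hUb
  have hz₀cl : z₀ ∈ closure U := frontier_subset_closure hz₀
  obtain ⟨x, hxmem, hxlim⟩ := mem_closure_iff_seq_limit.1 hz₀cl
  have htendsto : Tendsto (fun n => θ (x n)) atTop (𝓝 (θ z₀)) := by
    apply (hθc z₀ hz₀cl).tendsto.comp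
    rw [tendsto_nhdsWithin_iff]
    exact ⟨hxlim, Eventually.of_forall (fun n => subset_closure (hxmem n))⟩
  have hzero : Tendsto (fun n => θ (x n)) atTop (𝓝 0) := by
    have : (fun n => θ (x n)) = fun _ => (0:ℝ) := funext (fun n => hθ0 (x n) (hxmem n))
    rw [this]
    exact tendsto_const_nhds
  have hθz₀ : θ z₀ = 0 := tendsto_nhds_unique htendsto hzero
  have := hbdy z₀ hz₀
  linarith

lemma abs_expF_le {t s : ℝ} (h : |t| ≤ s) : |exp (-t) - exp t| ≤ exp s - exp (-s) := by
  obtain ⟨h1, h2⟩ := abs_le.1 h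
  rcases le_or_gt 0 t with ht | ht
  · have e1 : exp (-t) ≤ exp t := exp_le_exp.2 (by linarith)
    rw [abs_sub_comm, abs_of_nonneg (by linarith)]
    have := exp_le_exp.2 h2
    have := exp_le_exp.2 (show -s ≤ -t by linarith)
    linarith
  · have e1 : exp t ≤ exp (-t) := exp_le_exp.2 (by linarith)
    rw [abs_of_nonneg (by linarith)]
    have := exp_le_exp.2 (show -t ≤ s by linarith)
    have := exp_le_exp.2 (show -s ≤ t by linarith)
    linarith

/-- The central quantitative bound, for a single value of `ε`. -/
lemma key_bound {d : ℕ} (hd0 : 0 < d) {Ω : Set (EuclideanSpace ℝ (Fin d))}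
    (hΩopen : IsOpen Ω) (hΩne : Ω.Nonempty) (hΩbdd : IsBounded Ω)
    {W : EuclideanSpace ℝ (Fin d) → ℝ} {Cw : ℝ} (hCw : ∀ x, |W x| ≤ Cw)
    {I₀ : ℝ} (hI₀ : 0 < I₀) {φ : EuclideanSpace ℝ (Fin d) → ℝ}
    (hφ2 : ContDiffOn ℝ 2 φ Ω) (hφ1 : ContDiffOn ℝ 1 φ (closure Ω))
    {ε : ℝ} (hε : 0 < ε)
    (hPB : ∀ x ∈ Ω, -ε * lap φ x
      = I₀ * (exp (-(φ x)) / (∫ y in Ω, exp (-(φ y))) - exp (φ x) / (∫ y in Ω, exp (φ y))))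
    (hbc : ∀ x ∈ frontier Ω, φ x = W x)
    {x₀ : EuclideanSpace ℝ (Fin d)} {R : ℝ} (hR : 0 < R)
    (hball : Metric.closedBall x₀ R ⊆ Ω) :
    |I₀ * (exp (-(φ x₀)) / (∫ y in Ω, exp (-(φ y))) - exp (φ x₀) / (∫ y in Ω, exp (φ y)))|
      ≤ (I₀ / (volume Ω).toReal) *
        (exp ((2*Cw+1) * d / Real.cosh (Real.sqrt
            ((I₀ / ((volume Ω).toReal * exp (2*Cw))) / ε) * (R / Real.sqrt d)))
         - exp (-((2*Cw+1) * d / Real.cosh (Real.sqrt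
            ((I₀ / ((volume Ω).toReal * exp (2*Cw))) / ε) * (R / Real.sqrt d))))) := by
  have hCw0 : 0 ≤ Cw := le_trans (abs_nonneg _) (hCw x₀)
  have hmeas : MeasurableSet Ω := hΩopen.measurableSet
  have hclcomp : IsCompact (closure Ω) :=
    Metric.isCompact_of_isClosed_isBounded isClosed_closure hΩbdd.closure
  have hφcont : ContinuousOn φ (closure Ω) := hφ1.continuousOn
  set A := ∫ y in Ω, exp (-(φ y)) with hAdef
  set B := ∫ y in Ω, exp (φ y) with hBdef
  have hintA : IntegrableOn (fun y => exp (-(φ y))) Ω volume :=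
    ((Real.continuous_exp.comp_continuousOn hφcont.neg).integrableOn_compact hclcomp).mono_set
      subset_closure
  have hintB : IntegrableOn (fun y => exp (φ y)) Ω volume :=
    ((Real.continuous_exp.comp_continuousOn hφcont).integrableOn_compact hclcomp).mono_set
      subset_closure
  have hvolΩpos : (0:ENNReal) < volume Ω := hΩopen.measure_pos volume hΩne
  have hvolfin : volume Ω < ⊤ := hΩbdd.measure_lt_top
  set volΩ := (volume Ω).toReal with hvoldef
  have hvol : 0 < volΩ := ENNReal.toReal_pos hvolΩpos.ne' hvolfin.ne
  have hApos : 0 < A := by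
    rw [hAdef, setIntegral_pos_iff_support_of_nonneg_ae
      (Eventually.of_forall (fun y => (exp_pos _).le)) hintA]
    have hsupp : Function.support (fun y => exp (-(φ y))) ∩ Ω = Ω := by
      ext y; simp [Function.mem_support, (exp_pos (-(φ y))).ne']
    rw [hsupp]; exact hvolΩpos
  have hBpos : 0 < B := by
    rw [hBdef, setIntegral_pos_iff_support_of_nonneg_ae
      (Eventually.of_forall (fun y => (exp_pos _).le)) hintB]
    have hsupp : Function.support (fun y => exp (φ y)) ∩ Ω = Ω := by
      ext y; simp [Function.mem_support, (exp_pos (φ y)).ne']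
    rw [hsupp]; exact hvolΩpos
  set c := Real.log (B / A) / 2 with hcdef
  have hec2 : exp c * exp c = B / A := by
    rw [← Real.exp_add, hcdef]
    have : Real.log (B / A) / 2 + Real.log (B / A) / 2 = Real.log (B / A) := by ring
    rw [this, Real.exp_log (div_pos hBpos hApos)]
  have hBeq : B = exp c * exp c * A := by
    rw [hec2]; field_simp
  set ψ : EuclideanSpace ℝ (Fin d) → ℝ := fun x => φ x - c with hψdef
  set S := ∫ y in Ω, exp (ψ y) with hSdef
  have hexpψ : ∀ y, exp (ψ y) = exp (φ y) * (exp c)⁻¹ := by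
    intro y
    rw [hψdef]
    rw [Real.exp_sub, div_eq_mul_inv]
  have hexpnegψ : ∀ y, exp (-(ψ y)) = exp (-(φ y)) * exp c := by
    intro y
    rw [hψdef]
    simp only [neg_sub]
    rw [Real.exp_sub, Real.exp_neg]
    field_simp
  have hintψ : IntegrableOn (fun y => exp (ψ y)) Ω volume := by
    have : (fun y => exp (ψ y)) = fun y => exp (φ y) * (exp c)⁻¹ := funext hexpψ
    rw [this]; exact hintB.mul_const _
  have hintnegψ : IntegrableOn (fun y => exp (-(ψ y))) Ω volume := by
    have : (fun y => exp (-(ψ y))) = fun y => exp (-(φ y)) * exp c := funext hexpnegψ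
    rw [this]; exact hintA.mul_const _
  have hS_B : S = B * (exp c)⁻¹ := by
    rw [hSdef]
    calc (∫ y in Ω, exp (ψ y)) = ∫ y in Ω, exp (φ y) * (exp c)⁻¹ := by
          congr 1; funext y; exact hexpψ y
      _ = (∫ y in Ω, exp (φ y)) * (exp c)⁻¹ := by rw [integral_mul_const]
      _ = B * (exp c)⁻¹ := rfl
  have hS'_A : (∫ y in Ω, exp (-(ψ y))) = A * exp c := by
    calc (∫ y in Ω, exp (-(ψ y))) = ∫ y in Ω, exp (-(φ y)) * exp c := by
          congr 1; funext y; exact hexpnegψ y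
      _ = (∫ y in Ω, exp (-(φ y))) * exp c := by rw [integral_mul_const]
      _ = A * exp c := rfl
  have hSA : S = A * exp c := by
    rw [hS_B, hBeq]; field_simp
  have hSS' : S = ∫ y in Ω, exp (-(ψ y)) := by rw [hS'_A, hSA]
  have hSpos : 0 < S := by
    rw [hSA]; positivity
  have hSlow : volΩ ≤ S := by
    have h1 : ∫ y in Ω, (2:ℝ) ≤ ∫ y in Ω, (exp (ψ y) + exp (-(ψ y))) := by
      apply setIntegral_mono_on (integrableOn_const hvolfin.ne)
        (hintψ.add hintnegψ) hmeas
      intro y _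
      have h1 := add_one_le_exp (ψ y)
      have h2 := add_one_le_exp (-(ψ y))
      simp only [Pi.add_apply]
      linarith
    rw [setIntegral_const, integral_add hintψ hintnegψ, ← hSdef, ← hSS'] at h1
    simp only [smul_eq_mul, measureReal_def] at h1
    linarith
  set κ := I₀ / S with hκdef
  have hκpos : 0 < κ := div_pos hI₀ hSpos
  -- the pointwise algebraic identity
  have halg : ∀ x, I₀ * (exp (-(φ x)) / A - exp (φ x) / B)
      = κ * (exp (-(ψ x)) - exp (ψ x)) := by
    intro x
    rw [hκdef, hexpnegψ x, hexpψ x, hSA, hBeq]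
    have h1 : exp c ≠ 0 := (exp_pos c).ne'
    field_simp
  -- ψ form of the PDE
  have hψ2 : ContDiffOn ℝ 2 ψ Ω := hφ2.sub contDiffOn_const
  have hψc : ContinuousOn ψ (closure Ω) := hφcont.sub continuousOn_const
  have hpdeψ : ∀ x ∈ Ω, ε * lap ψ x = κ * (exp (ψ x) - exp (-(ψ x))) := by
    intro x hx
    have h := hPB x hx
    rw [halg x] at h
    have hlapeq : lap ψ x = lap φ x := lap_sub_const φ c x
    rw [hlapeq]
    linarith
  set θ : EuclideanSpace ℝ (Fin d) → ℝ := fun y => -(ψ y) with hθdef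
  have hθ2 : ContDiffOn ℝ 2 θ Ω := hψ2.neg
  have hθc : ContinuousOn θ (closure Ω) := hψc.neg
  have hpdeθ : ∀ x ∈ Ω, ε * lap θ x = κ * (exp (θ x) - exp (-(θ x))) := by
    intro x hx
    have h := hpdeψ x hx
    have hlapeq : lap θ x = -lap ψ x := lap_neg ψ x
    rw [hθdef]
    simp only
    rw [hlapeq, neg_neg]
    linarith
  have hSθ : ∫ x in Ω, exp (θ x) = ∫ x in Ω, exp (-(θ x)) := by
    rw [hθdef]
    simp only [neg_neg]
    rw [← hSdef, hSS']
  -- bounds on c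
  have hbdyψ : ∀ z ∈ frontier Ω, ψ z ≤ Cw - c := by
    intro z hz
    rw [hψdef]
    simp only
    have := (abs_le.1 (hCw z)).2
    rw [hbc z hz]
    linarith
  have hbdyθ : ∀ z ∈ frontier Ω, θ z ≤ Cw + c := by
    intro z hz
    rw [hθdef, hψdef]
    simp only
    have := (abs_le.1 (hCw z)).1
    rw [hbc z hz]
    linarith
  have hc1 : c ≤ Cw := by
    by_contra hcon
    push_neg at hcon
    exact no_neg_bdry hd0 hΩopen hΩne hΩbdd hψ2 hψc hε hκpos hpdeψ hbdyψ
      (by linarith) hintnegψ hintψ hSS'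
  have hc2 : -Cw ≤ c := by
    by_contra hcon
    push_neg at hcon
    have hintθ1 : IntegrableOn (fun x => exp (-(θ x))) Ω volume := by
      have : (fun x => exp (-(θ x))) = fun x => exp (ψ x) := by
        funext x; rw [hθdef]; simp
      rw [this]; exact hintψ
    have hintθ2 : IntegrableOn (fun x => exp (θ x)) Ω volume := by
      have : (fun x => exp (θ x)) = fun x => exp (-(ψ x)) := by
        funext x; rw [hθdef]
      rw [this]; exact hintnegψ
    exact no_neg_bdry hd0 hΩopen hΩne hΩbdd hθ2 hθc hε hκpos hpdeθ hbdyθ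
      (by linarith) hintθ1 hintθ2 hSθ
  -- uniform bound on ψ
  have hψle : ∀ x ∈ closure Ω, ψ x ≤ 2*Cw := by
    intro x hx
    have := maxp hΩopen hΩbdd hψ2 hψc hε hκpos hpdeψ hbdyψ x hx
    have : ψ x ≤ max 0 (Cw - c) := this
    rcases le_max_iff.1 this with h | h
    · linarith
    · linarith
  have hθle : ∀ x ∈ closure Ω, θ x ≤ 2*Cw := by
    intro x hx
    have := maxp hΩopen hΩbdd hθ2 hθc hε hκpos hpdeθ hbdyθ x hx
    rcases le_max_iff.1 this with h | h
    · linarith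
    · linarith
  -- upper bound on S, lower bound on κ
  have hShigh : S ≤ volΩ * exp (2*Cw) := by
    have h1 : ∫ y in Ω, exp (ψ y) ≤ ∫ y in Ω, exp (2*Cw) := by
      apply setIntegral_mono_on hintψ (integrableOn_const hvolfin.ne) hmeas
      intro y hy
      exact exp_le_exp.2 (hψle y (subset_closure hy))
    rw [setIntegral_const] at h1
    simp only [smul_eq_mul, measureReal_def] at h1
    rw [hSdef]
    exact h1
  set κ₀ := I₀ / (volΩ * exp (2*Cw)) with hκ₀def
  have hκ₀pos : 0 < κ₀ := by positivity
  have hκ₀le : κ₀ ≤ κ := by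
    rw [hκ₀def, hκdef]
    gcongr
  have hκle : κ ≤ I₀ / volΩ := by
    rw [hκdef]
    gcongr
  -- barrier estimates
  set q := R / Real.sqrt d with hqdef
  have hdpos : (0:ℝ) < d := by exact_mod_cast hd0
  have hqpos : 0 < q := div_pos hR (Real.sqrt_pos.2 hdpos)
  set b' := (2*Cw+1) * d / Real.cosh (Real.sqrt (κ / ε) * q) with hb'def
  set bb := (2*Cw+1) * d / Real.cosh (Real.sqrt (κ₀ / ε) * q) with hbbdef
  have hb'bb : b' ≤ bb := by
    rw [hb'def, hbbdef]
    apply div_le_div_of_nonneg_left (by positivity) (Real.cosh_pos _)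
    rw [Real.cosh_le_cosh]
    rw [abs_of_nonneg (by positivity), abs_of_nonneg (by positivity)]
    gcongr
  have hbb0 : 0 ≤ bb := by
    rw [hbbdef]
    positivity
  have hψx₀ : ψ x₀ ≤ b' := by
    rw [hb'def]
    have := barrier_est hd0 hΩopen hψ2 hε hκpos hpdeψ (M := 2*Cw) (by positivity)
      x₀ R hR hball (fun x hx => hψle x (subset_closure (hball hx)))
    exact this
  have hθx₀ : θ x₀ ≤ b' := by
    rw [hb'def]
    have := barrier_est hd0 hΩopen hθ2 hε hκpos hpdeθ (M := 2*Cw) (by positivity)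
      x₀ R hR hball (fun x hx => hθle x (subset_closure (hball hx)))
    exact this
  have habs : |ψ x₀| ≤ bb := by
    rw [abs_le]
    constructor
    · have : θ x₀ = -(ψ x₀) := rfl
      linarith
    · linarith
  -- final computation
  rw [halg x₀]
  rw [abs_mul, abs_of_pos hκpos]
  have h1 : |exp (-(ψ x₀)) - exp (ψ x₀)| ≤ exp bb - exp (-bb) := abs_expF_le habs
  have h2 : 0 ≤ exp bb - exp (-bb) := by
    have := exp_le_exp.2 (show -bb ≤ bb by linarith)
    linarith
  calc κ * |exp (-(ψ x₀)) - exp (ψ x₀)| ≤ (I₀ / volΩ) * (exp bb - exp (-bb)) := by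
        apply mul_le_mul hκle h1 (abs_nonneg _) (by positivity)
    _ = _ := by rw [hbbdef, hκ₀def, hqdef]

end Helpers


/-- Asymptotic electroneutrality of Poisson–Boltzmann equilibria with blocking boundary
conditions: for every compact `K ⊆ Ω`, `sup_{x ∈ K} |ρ_ε(x)| → 0` as `ε → 0⁺`. -/
theorem interior_electroneutrality_blocking
    {d : ℕ} (hd : d = 2 ∨ d = 3)
    (Ω : Set (EuclideanSpace ℝ (Fin d)))
    (hΩopen : IsOpen Ω) (hΩne : Ω.Nonempty) (hΩbdd : Bornology.IsBounded Ω)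
    (hΩconn : IsConnected Ω)
    (W : EuclideanSpace ℝ (Fin d) → ℝ) (hWsmooth : ContDiff ℝ (⊤ : ℕ∞) W)
    (hWbdd : ∃ C, ∀ x, |W x| ≤ C)
    (I₀ : ℝ) (hI₀ : 0 < I₀)
    (Φ : ℝ → EuclideanSpace ℝ (Fin d) → ℝ)
    (hΦC2 : ∀ ε > (0:ℝ), ContDiffOn ℝ 2 (Φ ε) Ω)
    (hΦC1 : ∀ ε > (0:ℝ), ContDiffOn ℝ 1 (Φ ε) (closure Ω))
    (hPB : ∀ ε > (0:ℝ), ∀ x ∈ Ω,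
      -ε * lap (Φ ε) x
        = I₀ * (exp (-(Φ ε x)) / (∫ y in Ω, exp (-(Φ ε y)))
            - exp (Φ ε x) / (∫ y in Ω, exp (Φ ε y))))
    (hbc : ∀ ε > (0:ℝ), ∀ x ∈ frontier Ω, Φ ε x = W x)
    (ρ : ℝ → EuclideanSpace ℝ (Fin d) → ℝ)
    (hρ : ∀ ε x, ρ ε x
      = I₀ * (exp (-(Φ ε x)) / (∫ y in Ω, exp (-(Φ ε y)))
          - exp (Φ ε x) / (∫ y in Ω, exp (Φ ε y))))
    (K : Set (EuclideanSpace ℝ (Fin d))) (hK : IsCompact K) (hKΩ : K ⊆ Ω) :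
    Tendsto (fun ε => ⨆ x ∈ K, |ρ ε x|) (𝓝[>] (0:ℝ)) (𝓝 0) := by
  obtain ⟨Cw, hCw⟩ := hWbdd
  have hd0 : 0 < d := by rcases hd with h | h <;> omega
  have hCw0 : 0 ≤ Cw := le_trans (abs_nonneg _) (hCw 0)
  obtain ⟨R, hRpos, hsubK⟩ := hK.exists_cthickening_subset_open hΩopen hKΩ
  have hballs : ∀ x₀ ∈ K, Metric.closedBall x₀ R ⊆ Ω := fun x₀ hx₀ =>
    (Metric.closedBall_subset_cthickening hx₀ R).trans hsubK
  set volΩ := (volume Ω).toReal with hvoldef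
  have hvol : 0 < volΩ :=
    ENNReal.toReal_pos (hΩopen.measure_pos volume hΩne).ne' hΩbdd.measure_lt_top.ne
  set κ₀ := I₀ / (volΩ * exp (2*Cw)) with hκ₀def
  have hκ₀pos : 0 < κ₀ := by positivity
  have hdpos : (0:ℝ) < d := by exact_mod_cast hd0
  have hsd : (0:ℝ) < Real.sqrt d := Real.sqrt_pos.2 hdpos
  set q := R / Real.sqrt d with hqdef
  have hqpos : 0 < q := div_pos hRpos hsd
  set b : ℝ → ℝ := fun ε => (2*Cw+1) * d / Real.cosh (Real.sqrt (κ₀ / ε) * q) with hbdef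
  set G : ℝ → ℝ := fun ε => (I₀ / volΩ) * (exp (b ε) - exp (-(b ε))) with hGdef
  have hb0 : ∀ ε, 0 ≤ b ε := by
    intro ε
    rw [hbdef]
    have := Real.cosh_pos (Real.sqrt (κ₀ / ε) * q)
    positivity
  have hG0 : ∀ ε, 0 ≤ G ε := by
    intro ε
    rw [hGdef]
    simp only
    have h1 : exp (-(b ε)) ≤ exp (b ε) := exp_le_exp.2 (by linarith [hb0 ε])
    have h2 : 0 ≤ I₀ / volΩ := by positivity
    nlinarith
  have key : ∀ ε ∈ Ioi (0:ℝ), ∀ x ∈ K, |ρ ε x| ≤ G ε := by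
    intro ε hε x hx
    rw [hρ]
    exact key_bound hd0 hΩopen hΩne hΩbdd hCw hI₀ (hΦC2 ε hε) (hΦC1 ε hε) hε
      (hPB ε hε) (hbc ε hε) hRpos (hballs x hx)
  -- limit of the majorant
  have hcoshTop : Tendsto Real.cosh atTop atTop := by
    apply tendsto_atTop_mono _ (tendsto_exp_atTop.atTop_div_const two_pos)
    intro x
    rw [Real.cosh_eq]
    have := exp_pos (-x)
    linarith
  have h1 : Tendsto (fun ε : ℝ => κ₀ / ε) (𝓝[>] 0) atTop := by
    have h := Tendsto.const_mul_atTop hκ₀pos tendsto_inv_nhdsGT_zero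
    have heq : (fun ε : ℝ => κ₀ * ε⁻¹) = fun ε : ℝ => κ₀ / ε := by
      funext ε; rw [div_eq_mul_inv]
    rwa [heq] at h
  have h2 : Tendsto (fun ε : ℝ => Real.sqrt (κ₀ / ε)) (𝓝[>] 0) atTop := by
    rw [tendsto_atTop]
    intro bnd
    filter_upwards [tendsto_atTop.1 h1 (bnd^2)] with ε hε
    calc bnd ≤ |bnd| := le_abs_self bnd
      _ = Real.sqrt (bnd^2) := (Real.sqrt_sq_eq_abs bnd).symm
      _ ≤ Real.sqrt (κ₀ / ε) := Real.sqrt_le_sqrt hε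
  have h3 : Tendsto (fun ε : ℝ => Real.sqrt (κ₀ / ε) * q) (𝓝[>] 0) atTop :=
    h2.atTop_mul_const hqpos
  have h4 : Tendsto (fun ε : ℝ => Real.cosh (Real.sqrt (κ₀ / ε) * q)) (𝓝[>] 0) atTop :=
    hcoshTop.comp h3
  have hbt : Tendsto b (𝓝[>] 0) (𝓝 0) := by
    rw [hbdef]
    exact Tendsto.div_atTop tendsto_const_nhds h4
  have hGt : Tendsto G (𝓝[>] 0) (𝓝 0) := by
    have hcont : Continuous (fun s : ℝ => (I₀ / volΩ) * (exp s - exp (-s))) :=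
      continuous_const.mul (Real.continuous_exp.sub (Real.continuous_exp.comp continuous_neg))
    have := (hcont.tendsto 0).comp hbt
    rw [hGdef]
    simpa [Function.comp_def] using this
  apply tendsto_of_tendsto_of_tendsto_of_le_of_le' tendsto_const_nhds hGt
  · filter_upwards with ε
    exact Real.iSup_nonneg fun x => Real.iSup_nonneg fun _ => abs_nonneg _
  · filter_upwards [self_mem_nhdsWithin] with ε hε
    apply Real.iSup_le _ (hG0 ε)
    intro x
    apply Real.iSup_le _ (hG0 ε)
    intro hx
    exact key ε hε x hx
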